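/- Let (X,μ) be a nonatomic probability space, T a tree on X, q ∈ (0,1), and φ a T-good function with ∫_X φ dμ = f. Let A = {I_j}_j be any pairwise disjoint family of elements of S_φ (not necessarily maximal). Then for every β > 0, ∫_{X \ ∪_j I_j} (M_T φ)^q dμ ≤ (1/((1−q)β)) · [ (β+1)( f^q − Σ_j μ(I_j)·y_{I_j}^q ) − (β+1)^q ∫_{X \ ∪_j I_j} φ^q dμ ], where y_{I_j} = Av_{I_j}(φ). -/

import Mathlib

/-!
Stop the tree at the family `I_j`. Along the stopped partitions the averages `u_m` of `φ` form a
martingale, and for its running maximum `M_m` the quantity `∫ (1-q) M_m^q + q M_m^(q-1) φ` never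
increases: on each cell of stage `m+1` the function `M_m` is constant, so `φ` may be replaced by
`u_{m+1}`, and then the tangent-line inequality `a^q ≤ (1-q) b^q + q b^(q-1) a` of the concave map
`t ↦ t^q` gives the pointwise comparison. At stage `0` the quantity is `f^q`. Once a cell has
reached some `I_j` it stays there, so `M_m` is constant on `I_j` and the same tangent inequality
bounds the contribution of `I_j` from below by `μ(I_j) y_j^q`; off the `I_j` nothing is stopped,
so the running maximum increases to `M_T φ`. Finally, the tangent inequality at `(β+1) φ` turns
`(β+1) ((1-q) M^q + q M^(q-1) φ)` into `(1-q) β M^q + (β+1)^q φ^q`.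
-/

open MeasureTheory Filter Set

noncomputable section

structure DTree (X : Type*) [MeasurableSpace X] (μ : Measure X) where
  mem : Set (Set X)
  child : Set X → Set (Set X)
  meas : ∀ I ∈ mem, MeasurableSet I
  top_mem : Set.univ ∈ mem
  pos : ∀ I ∈ mem, 0 < μ I
  child_sub_mem : ∀ I ∈ mem, child I ⊆ mem
  child_countable : ∀ I ∈ mem, (child I).Countable
  child_two : ∀ I ∈ mem, ∃ J ∈ child I, ∃ K ∈ child I, J ≠ K
  child_sub : ∀ I ∈ mem, ∀ J ∈ child I, J ⊆ I
  child_disj : ∀ I ∈ mem, (child I).Pairwise Disjoint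
  child_union : ∀ I ∈ mem, ⋃₀ child I = I
  generated : ∃ lvl : ℕ → Set (Set X),
    lvl 0 = {Set.univ} ∧
    (∀ m, lvl (m + 1) = ⋃ I ∈ lvl m, child I) ∧
    mem = ⋃ m, lvl m ∧
    Tendsto (fun m => ⨆ I ∈ lvl m, μ I) atTop (nhds 0)

variable {X : Type*} [MeasurableSpace X]

def trAvg (μ : Measure X) (φ : X → ℝ) (I : Set X) : ℝ :=
  (μ I).toReal⁻¹ * ∫ x in I, φ x ∂μ

/-- The dyadic maximal operator `M_T φ`. -/
def trMax (μ : Measure X) (T : DTree X μ) (φ : X → ℝ) (x : X) : ℝ :=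
  sSup {r : ℝ | ∃ I ∈ T.mem, x ∈ I ∧ r = trAvg μ (fun y => |φ y|) I}

/-- The exceptional set `A_φ`. -/
def trBad (μ : Measure X) (T : DTree X μ) (φ : X → ℝ) : Set X :=
  {x | ∀ I ∈ T.mem, x ∈ I → trAvg μ φ I < trMax μ T φ x}

def TGood (μ : Measure X) (T : DTree X μ) (φ : X → ℝ) : Prop :=
  μ (trBad μ T φ) = 0

/-- The set `A(φ, I) = {x ∈ X \ A_φ : I_φ(x) = I}`, where `I_φ(x)` is the largest
element `I` of the tree with `x ∈ I` and `M_T φ x = Av_I(φ)`. -/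
def trA (μ : Measure X) (T : DTree X μ) (φ : X → ℝ) (I : Set X) : Set X :=
  {x | x ∉ trBad μ T φ ∧ I ∈ T.mem ∧ x ∈ I ∧ trMax μ T φ x = trAvg μ φ I ∧
    ∀ J ∈ T.mem, x ∈ J → trMax μ T φ x = trAvg μ φ J → J ⊆ I}

/-- The subtree `S_φ`. -/
def trS (μ : Measure X) (T : DTree X μ) (φ : X → ℝ) : Set (Set X) :=
  {I | I ∈ T.mem ∧ 0 < μ (trA μ T φ I)} ∪ {Set.univ}

/-- `J* = I` : `I` is the smallest element of `S_φ` properly containing `J`. -/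
def IsStarOf (μ : Measure X) (T : DTree X μ) (φ : X → ℝ) (J I : Set X) : Prop :=
  I ∈ trS μ T φ ∧ J ⊂ I ∧ ∀ K ∈ trS μ T φ, J ⊂ K → I ⊆ K

def funH (q z : ℝ) : ℝ := (1 - q) * z ^ q + q * z ^ (q - 1)

/-- `ω_q(z) = (H_q⁻¹(z))^q`, with `H_q⁻¹` the inverse of `H_q : [1,∞) → [1,∞)`. -/
def funOmega (q z : ℝ) : ℝ := (Function.invFunOn (funH q) (Set.Ici 1) z) ^ q

def bellC (q f h L : ℝ) : ℝ := funOmega q (((1 - q) * L ^ q + q * L ^ (q - 1) * f) / h)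

/-- An extremal sequence for the Bellman function of three variables. -/
def IsExtremal (μ : Measure X) (T : DTree X μ) (q f h L : ℝ) (φ : ℕ → X → ℝ) : Prop :=
  (∀ n x, 0 ≤ φ n x) ∧ (∀ n, Measurable (φ n)) ∧ (∀ n, Integrable (φ n) μ) ∧
  (∀ n, ∫ x, φ n x ∂μ = f) ∧ (∀ n, ∫ x, φ n x ^ q ∂μ = h) ∧
  Tendsto (fun n => ∫ x, (max (trMax μ T (φ n) x) L) ^ q ∂μ) atTop
    (nhds (bellC q f h L * h))

open scoped ENNReal

/-! ### The tangent-line inequality for `t ↦ t ^ q` -/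

/-- The tangent line of the concave map `t ↦ t ^ q` at `b`, evaluated at `a`. -/
def powTangent (q : ℝ) (b a : ℝ≥0∞) : ℝ≥0∞ :=
  ENNReal.ofReal (1 - q) * b ^ q + ENNReal.ofReal q * (b ^ (q - 1) * a)

theorem ENNReal.rpow_sub_one_mul_self {q : ℝ} (hq : 0 < q) {x : ℝ≥0∞} (hx : x ≠ ∞) :
    x ^ (q - 1) * x = x ^ q := by
  rcases eq_or_ne x 0 with rfl | hx0
  · rw [mul_zero, ENNReal.zero_rpow_of_pos hq]
  · nth_rewrite 2 [← ENNReal.rpow_one x]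
    rw [← ENNReal.rpow_add _ _ hx0 hx, sub_add_cancel]

theorem ENNReal.rpow_le_rpow_of_nonpos {x y : ℝ≥0∞} {z : ℝ} (hxy : x ≤ y) (hz : z ≤ 0) :
    y ^ z ≤ x ^ z := by
  rw [← neg_neg z, ENNReal.rpow_neg y, ENNReal.rpow_neg x]
  exact ENNReal.inv_le_inv.2 (ENNReal.rpow_le_rpow hxy (neg_nonneg.2 hz))

theorem Real.rpow_le_tangent {q a b : ℝ} (hq : q ∈ Ioo (0 : ℝ) 1) (ha : 0 ≤ a) (hb : 0 < b) :
    a ^ q ≤ (1 - q) * b ^ q + q * (b ^ (q - 1) * a) := by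
  have hamgm : b ^ (1 - q) * a ^ q ≤ (1 - q) * b + q * a :=
    Real.geom_mean_le_arith_mean2_weighted (by linarith [hq.2]) hq.1.le hb.le ha (by ring)
  have hinv : b ^ (q - 1) * b ^ (1 - q) = 1 := by
    rw [← Real.rpow_add hb, sub_add_sub_cancel', sub_self, Real.rpow_zero]
  calc a ^ q = b ^ (q - 1) * (b ^ (1 - q) * a ^ q) := by rw [← mul_assoc, hinv, one_mul]
    _ ≤ b ^ (q - 1) * ((1 - q) * b + q * a) := by gcongr
    _ = (1 - q) * (b ^ (q - 1) * b) + q * (b ^ (q - 1) * a) := by ring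
    _ = (1 - q) * b ^ q + q * (b ^ (q - 1) * a) := by
      rw [← Real.rpow_add_one hb.ne', sub_add_cancel]

theorem rpow_le_powTangent {q : ℝ} (hq : q ∈ Ioo (0 : ℝ) 1) (a b : ℝ≥0∞) :
    a ^ q ≤ powTangent q b a := by
  have hq₀ : 0 < q := hq.1
  have hq₁ : 0 < 1 - q := by linarith [hq.2]
  rcases eq_or_ne b 0 with rfl | hb₀
  · rcases eq_or_ne a 0 with rfl | ha₀
    · simp [ENNReal.zero_rpow_of_pos hq₀]
    · simp [powTangent, ENNReal.zero_rpow_of_neg (by linarith : q - 1 < 0),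
        ENNReal.top_mul ha₀, ENNReal.zero_rpow_of_pos hq₀, hq₀]
  rcases eq_or_ne b ∞ with rfl | hb
  · rw [powTangent, ENNReal.top_rpow_of_pos hq₀, ENNReal.mul_top (ENNReal.ofReal_pos.2 hq₁).ne',
      top_add]
    exact le_top
  rcases eq_or_ne a ∞ with rfl | ha
  · have : b ^ (q - 1) ≠ 0 := by simp [ENNReal.rpow_eq_zero_iff, hb₀, hb]
    simp [powTangent, ENNReal.mul_top this, hq₀]
  have hbpos : 0 < b.toReal := ENNReal.toReal_pos hb₀ hb
  have h := ENNReal.ofReal_le_ofReal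
    (Real.rpow_le_tangent hq (ENNReal.toReal_nonneg (a := a)) hbpos)
  rwa [ENNReal.ofReal_add (by positivity) (by positivity), ENNReal.ofReal_mul hq₁.le,
    ENNReal.ofReal_mul hq₀.le, ENNReal.ofReal_mul (by positivity),
    ← ENNReal.ofReal_rpow_of_nonneg ENNReal.toReal_nonneg hq₀.le,
    ← ENNReal.ofReal_rpow_of_pos hbpos, ← ENNReal.ofReal_rpow_of_pos hbpos,
    ENNReal.ofReal_toReal ha, ENNReal.ofReal_toReal hb] at h

theorem powTangent_self {q : ℝ} (hq : q ∈ Ioo (0 : ℝ) 1) {a : ℝ≥0∞} (ha : a ≠ ∞) :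
    powTangent q a a = a ^ q := by
  rw [powTangent, ENNReal.rpow_sub_one_mul_self hq.1 ha, ← add_mul,
    ← ENNReal.ofReal_add (by linarith [hq.2]) hq.1.le, sub_add_cancel, ENNReal.ofReal_one,
    one_mul]

theorem powTangent_max_le {q : ℝ} (hq : q ∈ Ioo (0 : ℝ) 1) (b : ℝ≥0∞) {a : ℝ≥0∞}
    (ha : a ≠ ∞) : powTangent q (max b a) a ≤ powTangent q b a := by
  rcases le_total a b with h | h
  · rw [max_eq_left h]
  · rw [max_eq_right h, powTangent_self hq ha]
    exact rpow_le_powTangent hq a b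

theorem rpow_add_rpow_le_mul_powTangent {q β : ℝ} (hq : q ∈ Ioo (0 : ℝ) 1) (hβ : 0 ≤ β)
    (a b : ℝ≥0∞) :
    ENNReal.ofReal ((1 - q) * β) * b ^ q + ENNReal.ofReal ((β + 1) ^ q) * a ^ q ≤
      ENNReal.ofReal (β + 1) * powTangent q b a := by
  have hq₁ : 0 ≤ 1 - q := by linarith [hq.2]
  have htan := rpow_le_powTangent hq (ENNReal.ofReal (β + 1) * a) b
  rw [ENNReal.mul_rpow_of_nonneg _ _ hq.1.le,
    ENNReal.ofReal_rpow_of_nonneg (by linarith) hq.1.le] at htan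
  have hcoef : ENNReal.ofReal (β + 1) * ENNReal.ofReal (1 - q) =
      ENNReal.ofReal ((1 - q) * β) + ENNReal.ofReal (1 - q) := by
    rw [← ENNReal.ofReal_mul (by linarith), ← ENNReal.ofReal_add (by positivity) hq₁]
    ring_nf
  calc _ ≤ ENNReal.ofReal ((1 - q) * β) * b ^ q + powTangent q b (ENNReal.ofReal (β + 1) * a) := by
        gcongr
    _ = ENNReal.ofReal (β + 1) * powTangent q b a := by
      rw [powTangent, powTangent, mul_add,
        ← mul_assoc (ENNReal.ofReal (β + 1)) (ENNReal.ofReal (1 - q)), hcoef]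
      ring

/-! ### Refining sequences of partitions -/

/-- `P m x` is the cell containing `x` of the `m`-th partition of a refining sequence of
countable measurable partitions. -/
structure RefiningPartitions (P : ℕ → X → Set X) : Prop where
  mem_self : ∀ m x, x ∈ P m x
  eq_of_mem : ∀ {m x y}, y ∈ P m x → P m y = P m x
  succ_subset : ∀ m x, P (m + 1) x ⊆ P m x
  measurableSet : ∀ m x, MeasurableSet (P m x)
  countable_range : ∀ m, (range (P m)).Countable

def IsCellConst {β : Type*} (P : ℕ → X → Set X) (m : ℕ) (F : X → β) : Prop :=
  ∀ x, ∀ y ∈ P m x, F y = F x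

def condAvg (μ : Measure X) (P : ℕ → X → Set X) (Φ : X → ℝ≥0∞) (m : ℕ) (x : X) : ℝ≥0∞ :=
  ⨍⁻ y in P m x, Φ y ∂μ

theorem setLIntegral_powTangent_const {μ : Measure X} {s : Set X} (hs : μ s ≠ ∞)
    {Φ : X → ℝ≥0∞} (hΦ : AEMeasurable Φ (μ.restrict s)) (q : ℝ) (b : ℝ≥0∞) :
    ∫⁻ x in s, powTangent q b (Φ x) ∂μ = μ s * powTangent q b (⨍⁻ x in s, Φ x ∂μ) := by
  simp only [powTangent]
  rw [lintegral_add_left measurable_const, lintegral_const, Measure.restrict_apply_univ,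
    lintegral_const_mul' _ _ ENNReal.ofReal_ne_top, lintegral_const_mul'' _ hΦ,
    ← measure_mul_setLAverage _ hs]
  ring

theorem measure_mul_rpow_setLAverage_le {μ : Measure X} {s : Set X} (hs : μ s ≠ ∞)
    {Φ : X → ℝ≥0∞} (hΦ : AEMeasurable Φ (μ.restrict s)) {q : ℝ} (hq : q ∈ Ioo (0 : ℝ) 1)
    (b : ℝ≥0∞) :
    μ s * (⨍⁻ x in s, Φ x ∂μ) ^ q ≤ ∫⁻ x in s, powTangent q b (Φ x) ∂μ := by
  rw [setLIntegral_powTangent_const hs hΦ]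
  gcongr
  exact rpow_le_powTangent hq _ b

theorem setLIntegral_compl_iUnion_add_sum_le {μ : Measure X} {ι : Type*} {I : ι → Set X}
    (hdisj : Pairwise (Function.onFun Disjoint I)) {s : Finset ι}
    (hI : ∀ j ∈ s, MeasurableSet (I j)) (g : X → ℝ≥0∞) :
    ∫⁻ x in (⋃ j, I j)ᶜ, g x ∂μ + ∑ j ∈ s, ∫⁻ x in I j, g x ∂μ ≤ ∫⁻ x, g x ∂μ := by
  rw [← lintegral_biUnion_finset (fun i _ j _ hij => hdisj hij) hI,
    ← lintegral_union (s.measurableSet_biUnion hI)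
      (disjoint_compl_left.mono_right (iUnion₂_subset fun j _ => subset_iUnion I j))]
  exact setLIntegral_le_lintegral _ _

namespace RefiningPartitions

variable {μ : Measure X} {P : ℕ → X → Set X}

theorem subset_of_le (hP : RefiningPartitions P) {k m : ℕ} (hkm : k ≤ m) (x : X) :
    P m x ⊆ P k x :=
  antitone_nat_of_succ_le (f := fun n => P n x) (fun n => hP.succ_subset n x) hkm

theorem lintegral_congr_cells (hP : RefiningPartitions P) (m : ℕ) {F G : X → ℝ≥0∞}
    (h : ∀ x, ∫⁻ y in P m x, F y ∂μ = ∫⁻ y in P m x, G y ∂μ) :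
    ∫⁻ x, F x ∂μ = ∫⁻ x, G x ∂μ := by
  have := (hP.countable_range m).to_subtype
  have hcover : ⋃ K : range (P m), (K : Set X) = univ :=
    eq_univ_of_forall fun x => mem_iUnion.2 ⟨⟨P m x, mem_range_self x⟩, hP.mem_self m x⟩
  have hdisj : Pairwise (Function.onFun Disjoint fun K : range (P m) => (K : Set X)) := by
    rintro ⟨_, x, rfl⟩ ⟨_, y, rfl⟩ hne
    refine disjoint_left.2 fun z hzx hzy => hne (Subtype.ext ?_)
    exact (hP.eq_of_mem hzx).symm.trans (hP.eq_of_mem hzy)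
  have hmeas : ∀ K : range (P m), MeasurableSet (K : Set X) := by
    rintro ⟨_, x, rfl⟩
    exact hP.measurableSet m x
  rw [← setLIntegral_univ, ← setLIntegral_univ G, ← hcover, lintegral_iUnion hmeas hdisj,
    lintegral_iUnion hmeas hdisj]
  refine tsum_congr ?_
  rintro ⟨_, x, rfl⟩
  exact h x

end RefiningPartitions

namespace IsCellConst

variable {β : Type*} {P : ℕ → X → Set X} {m : ℕ} {F : X → β}

theorem mono (hF : IsCellConst P m F) (hP : RefiningPartitions P) {m' : ℕ} (hm : m ≤ m') :
    IsCellConst P m' F :=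
  fun x y hy => hF x y (hP.subset_of_le hm x hy)

theorem measurable [MeasurableSpace β] (hF : IsCellConst P m F) (hP : RefiningPartitions P) :
    Measurable F := by
  intro t _
  have hpre : F ⁻¹' t = ⋃ K ∈ P m '' (F ⁻¹' t), K := by
    ext y
    simp only [mem_preimage, mem_iUnion, mem_image, exists_prop]
    constructor
    · exact fun hy => ⟨P m y, ⟨y, hy, rfl⟩, hP.mem_self m y⟩
    · rintro ⟨_, ⟨x, hx, rfl⟩, hyx⟩
      rwa [hF x y hyx]
  rw [hpre]
  refine MeasurableSet.biUnion ((hP.countable_range m).mono (image_subset_range _ _)) ?_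
  rintro _ ⟨x, -, rfl⟩
  exact hP.measurableSet m x

theorem setLIntegral_cell {μ : Measure X} (hF : IsCellConst P m F) (hP : RefiningPartitions P)
    (G : β → X → ℝ≥0∞) (x : X) :
    ∫⁻ y in P m x, G (F y) y ∂μ = ∫⁻ y in P m x, G (F x) y ∂μ :=
  setLIntegral_congr_fun (hP.measurableSet m x) fun y hy => by rw [hF x y hy]

end IsCellConst

namespace RefiningPartitions

variable {μ : Measure X} {P : ℕ → X → Set X} {Φ : X → ℝ≥0∞} {q : ℝ}

theorem isCellConst_condAvg (hP : RefiningPartitions P) (m : ℕ) :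
    IsCellConst P m (condAvg μ P Φ m) :=
  fun _ _ hy => by rw [condAvg, condAvg, hP.eq_of_mem hy]

theorem isCellConst_partialSups_condAvg (hP : RefiningPartitions P) (m : ℕ) :
    IsCellConst P m (partialSups (condAvg μ P Φ) m) := by
  induction m with
  | zero => simpa using hP.isCellConst_condAvg 0
  | succ m ih =>
    intro x y hy
    rw [partialSups_add_one, Pi.sup_apply, Pi.sup_apply, ih.mono hP m.le_succ x y hy,
      hP.isCellConst_condAvg (m + 1) x y hy]

theorem condAvg_ne_top (hΦ : ∫⁻ x, Φ x ∂μ ≠ ∞) (m : ℕ) (x : X) : condAvg μ P Φ m x ≠ ∞ :=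
  (setLAverage_lt_top (ne_top_of_le_ne_top hΦ (setLIntegral_le_lintegral _ _))).ne

/-- `powTangent q b` is affine, and on each cell `condAvg` and `Φ` have the same integral. -/
theorem lintegral_powTangent_condAvg [IsFiniteMeasure μ] (hP : RefiningPartitions P)
    (hΦ : AEMeasurable Φ μ) {m : ℕ} {B : X → ℝ≥0∞} (hB : IsCellConst P m B) :
    ∫⁻ x, powTangent q (B x) (condAvg μ P Φ m x) ∂μ = ∫⁻ x, powTangent q (B x) (Φ x) ∂μ := by
  refine hP.lintegral_congr_cells m fun x => ?_
  rw [hB.setLIntegral_cell hP (fun b y => powTangent q b (condAvg μ P Φ m y)),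
    hB.setLIntegral_cell hP (fun b y => powTangent q b (Φ y)),
    (hP.isCellConst_condAvg m).setLIntegral_cell hP (fun c _ => powTangent q (B x) c),
    setLIntegral_const, setLIntegral_powTangent_const (measure_ne_top _ _) hΦ.restrict, mul_comm]
  rfl

theorem lintegral_powTangent_partialSups_le [IsFiniteMeasure μ] (hP : RefiningPartitions P)
    (hΦ : AEMeasurable Φ μ) (hΦfin : ∫⁻ x, Φ x ∂μ ≠ ∞) (hq : q ∈ Ioo (0 : ℝ) 1) (m : ℕ) :
    ∫⁻ x, powTangent q (partialSups (condAvg μ P Φ) m x) (Φ x) ∂μ ≤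
      ∫⁻ x, condAvg μ P Φ 0 x ^ q ∂μ := by
  induction m with
  | zero =>
    rw [partialSups_zero, ← hP.lintegral_powTangent_condAvg hΦ (hP.isCellConst_condAvg 0)]
    exact (lintegral_congr fun x => powTangent_self hq (condAvg_ne_top hΦfin 0 x)).le
  | succ m ih =>
    refine le_trans ?_ ih
    rw [← hP.lintegral_powTangent_condAvg hΦ (hP.isCellConst_partialSups_condAvg (m + 1)),
      ← hP.lintegral_powTangent_condAvg hΦ
        ((hP.isCellConst_partialSups_condAvg m).mono hP m.le_succ)]
    refine lintegral_mono fun x => ?_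
    rw [partialSups_add_one, Pi.sup_apply]
    exact powTangent_max_le hq _ (condAvg_ne_top hΦfin _ x)

theorem measure_mul_rpow_condAvg_le [IsFiniteMeasure μ] (hP : RefiningPartitions P)
    (hΦ : AEMeasurable Φ μ) (hq : q ∈ Ioo (0 : ℝ) 1) {m : ℕ} {B : X → ℝ≥0∞}
    (hB : IsCellConst P m B) (x : X) :
    μ (P m x) * condAvg μ P Φ m x ^ q ≤ ∫⁻ y in P m x, powTangent q (B y) (Φ y) ∂μ := by
  rw [hB.setLIntegral_cell hP (fun b y => powTangent q b (Φ y))]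
  exact measure_mul_rpow_setLAverage_le (measure_ne_top _ _) hΦ.restrict hq (B x)

theorem setLIntegral_compl_powTangent_add_sum_le [IsFiniteMeasure μ]
    (hP : RefiningPartitions P) (hΦ : AEMeasurable Φ μ) (hΦfin : ∫⁻ x, Φ x ∂μ ≠ ∞)
    (hq : q ∈ Ioo (0 : ℝ) 1) {ι : Type*} {I : ι → Set X}
    (hdisj : Pairwise (Function.onFun Disjoint I)) {m : ℕ} {s : Finset ι}
    (hs : ∀ j ∈ s, ∃ x, P m x = I j) :
    ∫⁻ x in (⋃ j, I j)ᶜ, powTangent q (partialSups (condAvg μ P Φ) m x) (Φ x) ∂μ +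
        ∑ j ∈ s, μ (I j) * (⨍⁻ x in I j, Φ x ∂μ) ^ q ≤
      ∫⁻ x, condAvg μ P Φ 0 x ^ q ∂μ :=
  calc
    _ ≤ ∫⁻ x in (⋃ j, I j)ᶜ, powTangent q (partialSups (condAvg μ P Φ) m x) (Φ x) ∂μ +
        ∑ j ∈ s, ∫⁻ x in I j, powTangent q (partialSups (condAvg μ P Φ) m x) (Φ x) ∂μ := by
      gcongr with j hj
      obtain ⟨x, hx⟩ := hs j hj
      rw [← hx]
      exact hP.measure_mul_rpow_condAvg_le hΦ hq (hP.isCellConst_partialSups_condAvg m) x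
    _ ≤ ∫⁻ x, powTangent q (partialSups (condAvg μ P Φ) m x) (Φ x) ∂μ :=
      setLIntegral_compl_iUnion_add_sum_le hdisj
        (fun j hj => (hs j hj).elim fun x hx => hx ▸ hP.measurableSet m x) _
    _ ≤ _ := hP.lintegral_powTangent_partialSups_le hΦ hΦfin hq m

/-- Each `I j` is a cell from some stage on, where the finite-stage bound applies; on the rest,
the stage is sent to infinity. -/
theorem setLIntegral_compl_powTangent_add_tsum_le [IsFiniteMeasure μ]
    (hP : RefiningPartitions P) (hΦ : AEMeasurable Φ μ) (hΦfin : ∫⁻ x, Φ x ∂μ ≠ ∞)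
    (hq : q ∈ Ioo (0 : ℝ) 1) {ι : Type*} {I : ι → Set X}
    (hdisj : Pairwise (Function.onFun Disjoint I)) (hI : ∀ j, ∃ k x, ∀ m, k ≤ m → P m x = I j) :
    ∫⁻ x in (⋃ j, I j)ᶜ, powTangent q (⨆ m, condAvg μ P Φ m x) (Φ x) ∂μ +
        ∑' j, μ (I j) * (⨍⁻ x in I j, Φ x ∂μ) ^ q ≤
      ∫⁻ x, condAvg μ P Φ 0 x ^ q ∂μ := by
  choose k x₀ hk using hI
  set M := partialSups (condAvg μ P Φ)
  have hMmeas : ∀ m, Measurable (M m) := fun m =>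
    (hP.isCellConst_partialSups_condAvg m).measurable hP
  -- `F m` pairs `M m ^ q` with the limit `(⨆ n, M n) ^ (q - 1)`: it increases to
  -- `powTangent q (⨆ n, M n) Φ` and lies below `powTangent q (M m') Φ` for every `m' ≥ m`.
  set F : ℕ → X → ℝ≥0∞ := fun m x =>
    ENNReal.ofReal (1 - q) * M m x ^ q + ENNReal.ofReal q * ((⨆ n, M n x) ^ (q - 1) * Φ x)
  have hstage : ∀ (s : Finset ι) (m : ℕ),
      ∫⁻ x in (⋃ j, I j)ᶜ, F m x ∂μ + ∑ j ∈ s, μ (I j) * (⨍⁻ x in I j, Φ x ∂μ) ^ q ≤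
        ∫⁻ x, condAvg μ P Φ 0 x ^ q ∂μ := by
    intro s m
    set m' := max m (s.sup k)
    refine le_trans ?_ (hP.setLIntegral_compl_powTangent_add_sum_le hΦ hΦfin hq hdisj
      (m := m') fun j hj => ⟨x₀ j, hk j m' (le_max_of_le_right (Finset.le_sup hj))⟩)
    gcongr with x
    simp only [F, powTangent]
    gcongr _ * ?_ + _ * (?_ * _)
    · exact ENNReal.rpow_le_rpow (M.monotone (le_max_left _ _) x) hq.1.le
    · exact ENNReal.rpow_le_rpow_of_nonpos (le_iSup (fun n => M n x) m') (by linarith [hq.2])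
  have hlim : ∫⁻ x in (⋃ j, I j)ᶜ, powTangent q (⨆ m, condAvg μ P Φ m x) (Φ x) ∂μ =
      ⨆ m, ∫⁻ x in (⋃ j, I j)ᶜ, F m x ∂μ := by
    rw [← lintegral_iSup' (fun m => by fun_prop) (ae_of_all _ fun x m m' hm => ?_)]
    · congr 1
      ext x
      have hpow : (⨆ m, M m x) ^ q = ⨆ m, M m x ^ q :=
        (ENNReal.orderIsoRpow q hq.1).map_iSup _
      have hsup : ⨆ m, condAvg μ P Φ m x = ⨆ m, M m x := by
        simp only [M, ← iSup_apply, iSup_partialSups_eq]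
      rw [hsup, powTangent, hpow, ENNReal.mul_iSup, ENNReal.iSup_add]
    · simp only [F]
      gcongr _ * ?_ + _
      exact ENNReal.rpow_le_rpow (M.monotone hm x) hq.1.le
  rw [hlim, ENNReal.tsum_eq_iSup_sum, ENNReal.iSup_add]
  refine iSup_le fun m => ?_
  rw [ENNReal.add_iSup]
  exact iSup_le fun s => hstage s m

end RefiningPartitions

/-! ### Levels and cells of a tree -/

namespace DTree

variable {μ : Measure X} (T : DTree X μ)

def level : ℕ → Set (Set X) := T.generated.choose

theorem level_zero : T.level 0 = {univ} := T.generated.choose_spec.1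

theorem level_succ (m : ℕ) : T.level (m + 1) = ⋃ I ∈ T.level m, T.child I :=
  T.generated.choose_spec.2.1 m

theorem mem_eq_iUnion_level : T.mem = ⋃ m, T.level m := T.generated.choose_spec.2.2.1

variable {T}

theorem mem_of_mem_level {m : ℕ} {I : Set X} (hI : I ∈ T.level m) : I ∈ T.mem := by
  rw [mem_eq_iUnion_level]
  exact mem_iUnion.2 ⟨m, hI⟩

theorem mem_of_mem_trS {φ : X → ℝ} {I : Set X} (hI : I ∈ trS μ T φ) : I ∈ T.mem := by
  rcases hI with hI | rfl
  exacts [hI.1, T.top_mem]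

variable (T)

theorem countable_level (m : ℕ) : (T.level m).Countable := by
  induction m with
  | zero => simp [level_zero]
  | succ m ih =>
    rw [level_succ]
    exact ih.biUnion fun I hI => T.child_countable I (mem_of_mem_level hI)

theorem sUnion_level (m : ℕ) : ⋃₀ T.level m = univ := by
  induction m with
  | zero => simp [level_zero]
  | succ m ih =>
    refine eq_univ_of_forall fun x => ?_
    obtain ⟨I, hI, hxI⟩ := mem_sUnion.1 (ih ▸ mem_univ x)
    rw [← T.child_union I (mem_of_mem_level hI)] at hxI
    obtain ⟨J, hJ, hxJ⟩ := mem_sUnion.1 hxI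
    exact mem_sUnion.2 ⟨J, T.level_succ m ▸ mem_iUnion₂.2 ⟨I, hI, hJ⟩, hxJ⟩

theorem pairwise_disjoint_level (m : ℕ) : (T.level m).Pairwise Disjoint := by
  induction m with
  | zero => simp [level_zero]
  | succ m ih =>
    rw [level_succ]
    simp only [Set.Pairwise, mem_iUnion, exists_prop]
    rintro J₁ ⟨I₁, hI₁, hJ₁⟩ J₂ ⟨I₂, hI₂, hJ₂⟩ hne
    by_cases hI : I₁ = I₂
    · subst hI
      exact T.child_disj I₁ (mem_of_mem_level hI₁) hJ₁ hJ₂ hne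
    · exact (ih hI₁ hI₂ hI).mono (T.child_sub _ (mem_of_mem_level hI₁) _ hJ₁)
        (T.child_sub _ (mem_of_mem_level hI₂) _ hJ₂)

theorem countable_mem : T.mem.Countable := by
  rw [mem_eq_iUnion_level]
  exact countable_iUnion T.countable_level

def cell (m : ℕ) (x : X) : Set X := ⋃₀ {I ∈ T.level m | x ∈ I}

variable {T}

theorem cell_eq {m : ℕ} {x : X} {I : Set X} (hI : I ∈ T.level m) (hx : x ∈ I) :
    T.cell m x = I := by
  rw [cell, ← sUnion_singleton I]
  congr
  ext J
  refine ⟨fun ⟨hJ, hxJ⟩ => ?_, fun hJ => (mem_singleton_iff.1 hJ) ▸ ⟨hI, hx⟩⟩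
  by_contra hne
  exact disjoint_left.1 (T.pairwise_disjoint_level m hJ hI hne) hxJ hx

theorem cell_mem_level (m : ℕ) (x : X) : T.cell m x ∈ T.level m := by
  obtain ⟨I, hI, hx⟩ := mem_sUnion.1 (T.sUnion_level m ▸ mem_univ x)
  rwa [cell_eq hI hx]

theorem mem_cell (m : ℕ) (x : X) : x ∈ T.cell m x := by
  obtain ⟨I, hI, hx⟩ := mem_sUnion.1 (T.sUnion_level m ▸ mem_univ x)
  rwa [cell_eq hI hx]

theorem cell_mem (m : ℕ) (x : X) : T.cell m x ∈ T.mem := mem_of_mem_level (cell_mem_level m x)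

theorem cell_zero (x : X) : T.cell 0 x = univ :=
  cell_eq (by rw [level_zero]; rfl) (mem_univ x)

theorem cell_eq_of_mem {m : ℕ} {x y : X} (hy : y ∈ T.cell m x) : T.cell m y = T.cell m x :=
  cell_eq (cell_mem_level m x) hy

theorem refiningPartitions_cell : RefiningPartitions T.cell where
  mem_self := mem_cell
  eq_of_mem := cell_eq_of_mem
  succ_subset m x := by
    obtain ⟨I, hI, hJ⟩ := mem_iUnion₂.1 (T.level_succ m ▸ cell_mem_level (m + 1) x)
    have hsub := T.child_sub I (mem_of_mem_level hI) _ hJ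
    rwa [cell_eq hI (hsub (mem_cell (m + 1) x))]
  measurableSet m x := T.meas _ (cell_mem m x)
  countable_range m := (T.countable_level m).mono (range_subset_iff.2 (cell_mem_level m))

theorem exists_cell_eq {I : Set X} (hI : I ∈ T.mem) {x : X} (hx : x ∈ I) :
    ∃ m, T.cell m x = I := by
  rw [mem_eq_iUnion_level] at hI
  obtain ⟨m, hm⟩ := mem_iUnion.1 hI
  exact ⟨m, cell_eq hm hx⟩

theorem cell_subset_or_subset {J : Set X} (hJ : J ∈ T.mem) {x : X} (hx : x ∈ J) (m : ℕ) :
    T.cell m x ⊆ J ∨ J ⊆ T.cell m x := by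
  obtain ⟨k, rfl⟩ := exists_cell_eq hJ hx
  rcases le_total k m with h | h
  exacts [Or.inl (refiningPartitions_cell.subset_of_le h x),
    Or.inr (refiningPartitions_cell.subset_of_le h x)]

/-! ### Stopping the tree at a disjoint family -/

variable (T)

open Classical in
def stoppedCell {ι : Type*} (I : ι → Set X) (m : ℕ) (x : X) : Set X :=
  if h : ∃ j, T.cell m x ⊆ I j then I h.choose else T.cell m x

variable {T} {ι : Type*} {I : ι → Set X}

theorem stoppedCell_of_subset (hdisj : Pairwise (Function.onFun Disjoint I)) {m : ℕ} {x : X}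
    {j : ι} (h : T.cell m x ⊆ I j) : T.stoppedCell I m x = I j := by
  have hex : ∃ j, T.cell m x ⊆ I j := ⟨j, h⟩
  rw [stoppedCell, dif_pos hex]
  by_contra hne
  exact disjoint_left.1 (hdisj fun h' => hne (congrArg I h')) (hex.choose_spec (mem_cell m x))
    (h (mem_cell m x))

theorem stoppedCell_of_not_subset {m : ℕ} {x : X} (h : ∀ j, ¬ T.cell m x ⊆ I j) :
    T.stoppedCell I m x = T.cell m x :=
  dif_neg (not_exists.2 h)

theorem stoppedCell_of_notMem {m : ℕ} {x : X} (hx : x ∉ ⋃ j, I j) :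
    T.stoppedCell I m x = T.cell m x :=
  stoppedCell_of_not_subset fun j h => hx (mem_iUnion.2 ⟨j, h (mem_cell m x)⟩)

theorem stoppedCell_zero (hdisj : Pairwise (Function.onFun Disjoint I)) (x : X) :
    T.stoppedCell I 0 x = univ := by
  by_cases h : ∃ j, T.cell 0 x ⊆ I j
  · obtain ⟨j, hj⟩ := h
    rw [stoppedCell_of_subset hdisj hj]
    exact univ_subset_iff.1 (cell_zero x ▸ hj)
  · rw [stoppedCell_of_not_subset (not_exists.1 h), cell_zero]

theorem refiningPartitions_stoppedCell (hmem : ∀ j, I j ∈ T.mem)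
    (hdisj : Pairwise (Function.onFun Disjoint I)) : RefiningPartitions (T.stoppedCell I) where
  mem_self m x := by
    unfold stoppedCell
    split_ifs with h
    exacts [h.choose_spec (mem_cell m x), mem_cell m x]
  eq_of_mem {m x y} hy := by
    by_cases h : ∃ j, T.cell m x ⊆ I j
    · obtain ⟨j, hj⟩ := h
      rw [stoppedCell_of_subset hdisj hj] at hy ⊢
      refine stoppedCell_of_subset hdisj ?_
      rcases cell_subset_or_subset (hmem j) hy m with h' | h'
      · exact h'
      · rwa [← cell_eq_of_mem (h' (hj (mem_cell m x)))]
    · rw [stoppedCell_of_not_subset (not_exists.1 h)] at hy ⊢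
      rw [← cell_eq_of_mem hy] at h
      rw [stoppedCell_of_not_subset (not_exists.1 h), cell_eq_of_mem hy]
  succ_subset m x := by
    by_cases h : ∃ j, T.cell m x ⊆ I j
    · obtain ⟨j, hj⟩ := h
      rw [stoppedCell_of_subset hdisj hj,
        stoppedCell_of_subset hdisj ((refiningPartitions_cell.succ_subset m x).trans hj)]
    rw [stoppedCell_of_not_subset (not_exists.1 h)]
    by_cases h' : ∃ j, T.cell (m + 1) x ⊆ I j
    · obtain ⟨j, hj⟩ := h'
      rw [stoppedCell_of_subset hdisj hj]
      exact (cell_subset_or_subset (hmem j) (hj (mem_cell _ x)) m).resolve_left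
        fun h'' => h ⟨j, h''⟩
    · rw [stoppedCell_of_not_subset (not_exists.1 h')]
      exact refiningPartitions_cell.succ_subset m x
  measurableSet m x := by
    unfold stoppedCell
    split_ifs
    exacts [T.meas _ (hmem _), T.meas _ (cell_mem m x)]
  countable_range m := by
    refine T.countable_mem.mono (range_subset_iff.2 fun x => ?_)
    unfold stoppedCell
    split_ifs
    exacts [hmem _, cell_mem m x]

theorem exists_stoppedCell_eq (hmem : ∀ j, I j ∈ T.mem)
    (hdisj : Pairwise (Function.onFun Disjoint I)) (j : ι) :
    ∃ k x, ∀ m, k ≤ m → T.stoppedCell I m x = I j := by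
  obtain ⟨x, hx⟩ := nonempty_of_measure_ne_zero (T.pos _ (hmem j)).ne'
  obtain ⟨k, hk⟩ := exists_cell_eq (hmem j) hx
  exact ⟨k, x, fun m hm =>
    stoppedCell_of_subset hdisj (hk ▸ refiningPartitions_cell.subset_of_le hm x)⟩

end DTree

/-! ### The maximal operator -/

section Maximal

variable {μ : Measure X} {φ : X → ℝ}

theorem trAvg_eq_setAverage (φ : X → ℝ) (K : Set X) : trAvg μ φ K = ⨍ x in K, φ x ∂μ := by
  rw [setAverage_eq, smul_eq_mul, measureReal_def]
  rfl

theorem ofReal_trAvg (h0 : ∀ x, 0 ≤ φ x) (hint : Integrable φ μ) (K : Set X) :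
    ENNReal.ofReal (trAvg μ φ K) = ⨍⁻ x in K, ENNReal.ofReal (φ x) ∂μ := by
  rw [trAvg_eq_setAverage, ofReal_setAverage hint.integrableOn (ae_of_all _ fun x => h0 x),
    setLAverage_eq]

theorem trAvg_nonneg (h0 : ∀ x, 0 ≤ φ x) (K : Set X) : 0 ≤ trAvg μ φ K :=
  mul_nonneg (inv_nonneg.2 ENNReal.toReal_nonneg) (integral_nonneg fun x => h0 x)

theorem trMax_nonneg (T : DTree X μ) (x : X) : 0 ≤ trMax μ T φ x :=
  Real.sSup_nonneg fun _ ⟨I, _, _, hr⟩ => hr ▸ trAvg_nonneg (fun y => abs_nonneg (φ y)) I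

theorem trMax_eq_toReal_iSup_condAvg (T : DTree X μ) (h0 : ∀ x, 0 ≤ φ x)
    (hint : Integrable φ μ) (x : X) :
    trMax μ T φ x = (⨆ m, condAvg μ T.cell (fun y => ENNReal.ofReal (φ y)) m x).toReal := by
  have hset : {r : ℝ | ∃ I ∈ T.mem, x ∈ I ∧ r = trAvg μ (fun y => |φ y|) I} =
      range fun m => trAvg μ φ (T.cell m x) := by
    simp only [abs_of_nonneg (h0 _)]
    ext r
    constructor
    · rintro ⟨I, hI, hx, rfl⟩
      obtain ⟨m, rfl⟩ := DTree.exists_cell_eq hI hx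
      exact ⟨m, rfl⟩
    · rintro ⟨m, rfl⟩
      exact ⟨_, DTree.cell_mem m x, DTree.mem_cell m x, rfl⟩
  simp only [condAvg, ← ofReal_trAvg h0 hint]
  rw [trMax, hset, sSup_range, ENNReal.toReal_iSup fun _ => ENNReal.ofReal_ne_top]
  simp only [ENNReal.toReal_ofReal (trAvg_nonneg h0 _)]

theorem measurable_trMax (T : DTree X μ) (h0 : ∀ x, 0 ≤ φ x) (hint : Integrable φ μ) :
    Measurable (trMax μ T φ) := by
  rw [funext (trMax_eq_toReal_iSup_condAvg T h0 hint)]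
  have hP := DTree.refiningPartitions_cell (T := T)
  exact (Measurable.iSup fun m => (hP.isCellConst_condAvg m).measurable hP).ennreal_toReal

theorem ofReal_trMax_rpow_le (T : DTree X μ) (h0 : ∀ x, 0 ≤ φ x) (hint : Integrable φ μ)
    {ι : Type*} {I : ι → Set X} {q : ℝ} (hq : 0 ≤ q) {x : X} (hx : x ∉ ⋃ j, I j) :
    ENNReal.ofReal (trMax μ T φ x ^ q) ≤
      (⨆ m, condAvg μ (T.stoppedCell I) (fun y => ENNReal.ofReal (φ y)) m x) ^ q := by
  simp only [condAvg, DTree.stoppedCell_of_notMem hx]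
  rw [trMax_eq_toReal_iSup_condAvg T h0 hint,
    ← ENNReal.ofReal_rpow_of_nonneg ENNReal.toReal_nonneg hq]
  exact ENNReal.rpow_le_rpow ENNReal.ofReal_toReal_le hq

variable {ι : Type*} {I : ι → Set X}

theorem setLIntegral_compl_powTangent_stoppedCell_add_tsum_le [IsProbabilityMeasure μ]
    (T : DTree X μ) {q f : ℝ} (hq : q ∈ Ioo (0 : ℝ) 1) (h0 : ∀ x, 0 ≤ φ x)
    (hint : Integrable φ μ) (hf : ∫ x, φ x ∂μ = f) (hmem : ∀ j, I j ∈ T.mem)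
    (hdisj : Pairwise (Function.onFun Disjoint I)) :
    ∫⁻ x in (⋃ j, I j)ᶜ, powTangent q
        (⨆ m, condAvg μ (T.stoppedCell I) (fun y => ENNReal.ofReal (φ y)) m x)
        (ENNReal.ofReal (φ x)) ∂μ +
        ∑' j, μ (I j) * ENNReal.ofReal (trAvg μ φ (I j)) ^ q ≤
      ENNReal.ofReal (f ^ q) := by
  have hΦint : ∫⁻ x, ENNReal.ofReal (φ x) ∂μ = ENNReal.ofReal f := by
    rw [← hf, ofReal_integral_eq_lintegral_ofReal hint (ae_of_all _ h0)]
  have hstart : ∫⁻ x, condAvg μ (T.stoppedCell I) (fun y => ENNReal.ofReal (φ y)) 0 x ^ q ∂μ =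
      ENNReal.ofReal (f ^ q) := by
    simp only [condAvg, DTree.stoppedCell_zero hdisj, Measure.restrict_univ,
      laverage_eq_lintegral, hΦint, lintegral_const, measure_univ, mul_one]
    rw [ENNReal.ofReal_rpow_of_nonneg (hf ▸ integral_nonneg h0) hq.1.le]
  simp only [ofReal_trAvg h0 hint, ← hstart]
  exact (DTree.refiningPartitions_stoppedCell hmem hdisj).setLIntegral_compl_powTangent_add_tsum_le
    hint.aemeasurable.ennreal_ofReal (hΦint ▸ ENNReal.ofReal_ne_top) hq hdisj
    (DTree.exists_stoppedCell_eq hmem hdisj)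

theorem setLIntegral_compl_trMax_rpow_le (T : DTree X μ) {q β : ℝ} (hq : q ∈ Ioo (0 : ℝ) 1)
    (hβ : 0 ≤ β) (h0 : ∀ x, 0 ≤ φ x) (hint : Integrable φ μ) (hmem : ∀ j, I j ∈ T.mem)
    (hdisj : Pairwise (Function.onFun Disjoint I)) :
    ∫⁻ x in (⋃ j, I j)ᶜ, (ENNReal.ofReal ((1 - q) * β) * ENNReal.ofReal (trMax μ T φ x ^ q) +
        ENNReal.ofReal ((β + 1) ^ q) * ENNReal.ofReal (φ x ^ q)) ∂μ ≤
      ENNReal.ofReal (β + 1) * ∫⁻ x in (⋃ j, I j)ᶜ, powTangent q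
        (⨆ m, condAvg μ (T.stoppedCell I) (fun y => ENNReal.ofReal (φ y)) m x)
        (ENNReal.ofReal (φ x)) ∂μ := by
  set M := fun x => ⨆ m, condAvg μ (T.stoppedCell I) (fun y => ENNReal.ofReal (φ y)) m x
  have hP := DTree.refiningPartitions_stoppedCell hmem hdisj
  have hM : Measurable M := Measurable.iSup fun m => (hP.isCellConst_condAvg m).measurable hP
  have hΦ : AEMeasurable (fun x => ENNReal.ofReal (φ x)) μ := hint.aemeasurable.ennreal_ofReal
  rw [← lintegral_const_mul' _ _ ENNReal.ofReal_ne_top]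
  refine setLIntegral_mono_ae ?_ (ae_of_all _ fun x hx => ?_)
  · exact (((hM.pow_const q).const_mul _).aemeasurable.add
      (((hM.pow_const (q - 1)).aemeasurable.mul hΦ.restrict).const_mul _)).const_mul _
  calc
    _ ≤ ENNReal.ofReal ((1 - q) * β) * M x ^ q +
        ENNReal.ofReal ((β + 1) ^ q) * ENNReal.ofReal (φ x) ^ q := by
      rw [ENNReal.ofReal_rpow_of_nonneg (h0 x) hq.1.le]
      gcongr
      exact ofReal_trMax_rpow_le T h0 hint hq.1.le hx
    _ ≤ _ := rpow_add_rpow_le_mul_powTangent hq hβ _ _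

theorem ofReal_mul_lintegral_compl_trMax_add_le [IsProbabilityMeasure μ] (T : DTree X μ)
    {q β f : ℝ} (hq : q ∈ Ioo (0 : ℝ) 1) (hβ : 0 ≤ β) (h0 : ∀ x, 0 ≤ φ x)
    (hint : Integrable φ μ) (hf : ∫ x, φ x ∂μ = f) (hmem : ∀ j, I j ∈ T.mem)
    (hdisj : Pairwise (Function.onFun Disjoint I)) :
    ENNReal.ofReal ((1 - q) * β) * ∫⁻ x in (⋃ j, I j)ᶜ, ENNReal.ofReal (trMax μ T φ x ^ q) ∂μ +
        ENNReal.ofReal ((β + 1) ^ q) * ∫⁻ x in (⋃ j, I j)ᶜ, ENNReal.ofReal (φ x ^ q) ∂μ +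
        ENNReal.ofReal (β + 1) * ∑' j, μ (I j) * ENNReal.ofReal (trAvg μ φ (I j)) ^ q ≤
      ENNReal.ofReal ((β + 1) * f ^ q) :=
  calc
    _ ≤ ∫⁻ x in (⋃ j, I j)ᶜ, (ENNReal.ofReal ((1 - q) * β) *
          ENNReal.ofReal (trMax μ T φ x ^ q) + ENNReal.ofReal ((β + 1) ^ q) *
          ENNReal.ofReal (φ x ^ q)) ∂μ +
        ENNReal.ofReal (β + 1) * ∑' j, μ (I j) * ENNReal.ofReal (trAvg μ φ (I j)) ^ q := by
      rw [← lintegral_const_mul' _ _ ENNReal.ofReal_ne_top,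
        ← lintegral_const_mul' _ _ ENNReal.ofReal_ne_top]
      gcongr
      exact le_lintegral_add _ _
    _ ≤ ENNReal.ofReal (β + 1) * _ + ENNReal.ofReal (β + 1) * _ :=
      add_le_add (setLIntegral_compl_trMax_rpow_le T hq hβ h0 hint hmem hdisj) le_rfl
    _ = ENNReal.ofReal (β + 1) * (_ + _) := (mul_add _ _ _).symm
    _ ≤ ENNReal.ofReal (β + 1) * ENNReal.ofReal (f ^ q) :=
      mul_le_mul_right
        (setLIntegral_compl_powTangent_stoppedCell_add_tsum_le T hq h0 hint hf hmem hdisj) _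
    _ = ENNReal.ofReal ((β + 1) * f ^ q) := (ENNReal.ofReal_mul (by linarith)).symm

end Maximal

theorem ENNReal.mul_toReal_add_le_of_le_ofReal {a b c d : ℝ} (ha : 0 ≤ a) (hb : 0 ≤ b)
    (hc : 0 ≤ c) (hd : 0 ≤ d) {A B C : ℝ≥0∞}
    (h : ENNReal.ofReal a * A + ENNReal.ofReal b * B + ENNReal.ofReal c * C ≤ ENNReal.ofReal d) :
    a * A.toReal + b * B.toReal + c * C.toReal ≤ d := by
  have hfin := ne_top_of_le_ne_top ENNReal.ofReal_ne_top h
  rw [ENNReal.add_ne_top, ENNReal.add_ne_top] at hfin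
  have h' := ENNReal.toReal_mono ENNReal.ofReal_ne_top h
  rwa [ENNReal.toReal_add (ENNReal.add_ne_top.2 hfin.1) hfin.2,
    ENNReal.toReal_add hfin.1.1 hfin.1.2, ENNReal.toReal_mul, ENNReal.toReal_mul,
    ENNReal.toReal_mul, ENNReal.toReal_ofReal ha, ENNReal.toReal_ofReal hb,
    ENNReal.toReal_ofReal hc, ENNReal.toReal_ofReal hd] at h'

theorem statement14_general {X : Type*} [MeasurableSpace X] (μ : Measure X)
    [IsProbabilityMeasure μ] (T : DTree X μ)
    (q f : ℝ) (hq : q ∈ Set.Ioo (0 : ℝ) 1)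
    (φ : X → ℝ) (h0 : ∀ x, 0 ≤ φ x) (hint : Integrable φ μ)
    (hf : (∫ x, φ x ∂μ) = f)
    {ι : Type*} (I : ι → Set X)
    (hmem : ∀ j, I j ∈ trS μ T φ) (hdisj : Pairwise (Function.onFun Disjoint I))
    (β : ℝ) (hβ : 0 < β) :
    (∫ x in (⋃ j, I j)ᶜ, (trMax μ T φ x) ^ q ∂μ) ≤
      (1 / ((1 - q) * β)) *
        ((β + 1) * (f ^ q - ∑' j, (μ (I j)).toReal * trAvg μ φ (I j) ^ q) -
          (β + 1) ^ q * ∫ x in (⋃ j, I j)ᶜ, φ x ^ q ∂μ) := by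
  have hq₁ : 0 < 1 - q := sub_pos.2 hq.2
  have hf₀ : 0 ≤ f := hf ▸ integral_nonneg h0
  have hbound := ENNReal.mul_toReal_add_le_of_le_ofReal (mul_pos hq₁ hβ).le (by positivity)
    (by positivity) (by positivity)
    (ofReal_mul_lintegral_compl_trMax_add_le T hq hβ.le h0 hint hf
      (fun j => DTree.mem_of_mem_trS (hmem j)) hdisj)
  rw [← integral_eq_lintegral_of_nonneg_ae
      (ae_of_all _ fun x => Real.rpow_nonneg (trMax_nonneg T x) q)
      ((measurable_trMax T h0 hint).pow_const q).aestronglyMeasurable,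
    ← integral_eq_lintegral_of_nonneg_ae (ae_of_all _ fun x => Real.rpow_nonneg (h0 x) q)
      (hint.aemeasurable.pow_const q).aestronglyMeasurable.restrict,
    ENNReal.tsum_toReal_eq fun j => ENNReal.mul_ne_top (measure_ne_top _ _)
      (ENNReal.rpow_ne_top_of_nonneg hq.1.le ENNReal.ofReal_ne_top)] at hbound
  simp only [ENNReal.toReal_mul, ← ENNReal.toReal_rpow, ENNReal.toReal_ofReal (trAvg_nonneg h0 _)]
    at hbound
  rw [one_div, inv_mul_eq_div, le_div_iff₀ (mul_pos hq₁ hβ)]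
  linarith

/-- the complement inequality for an arbitrary pairwise disjoint
family in `S_φ` (not necessarily maximal). -/
theorem statement14 {X : Type*} [MeasurableSpace X] (μ : Measure X)
    [IsProbabilityMeasure μ] [NullSingletonClass μ] (T : DTree X μ)
    (q f : ℝ) (hq : q ∈ Set.Ioo (0 : ℝ) 1)
    (φ : X → ℝ) (h0 : ∀ x, 0 ≤ φ x) (hint : Integrable φ μ) (hgood : TGood μ T φ)
    (hf : (∫ x, φ x ∂μ) = f)
    {ι : Type*} [Countable ι] (I : ι → Set X)
    (hmem : ∀ j, I j ∈ trS μ T φ) (hdisj : Pairwise (Function.onFun Disjoint I))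
    (β : ℝ) (hβ : 0 < β) :
    (∫ x in (⋃ j, I j)ᶜ, (trMax μ T φ x) ^ q ∂μ) ≤
      (1 / ((1 - q) * β)) *
        ((β + 1) * (f ^ q - ∑' j, (μ (I j)).toReal * trAvg μ φ (I j) ^ q) -
          (β + 1) ^ q * ∫ x in (⋃ j, I j)ᶜ, φ x ^ q ∂μ) :=
  statement14_general μ T q f hq φ h0 hint hf I hmem hdisj β hβ

end
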